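/- arXiv:1205.5044 — 2 statements merged into one kernel-verified Lean document; each statement's English description precedes it below -/
import Mathlib

section
/- Let W ⊂ ℝ^d be a convex compact body with inradius ϱ(W) > 0, and let x ∈ ℝ^d with ‖x‖ ≤ ϱ(W). Then 1 − |W ∩ (W − x)|/|W| ≤ d‖x‖/ϱ(W), where W − x is the translate of W by −x and |·| is Lebesgue measure. -/
open MeasureTheory Metric

/-- The inradius of a set `W`. -/
noncomputable def inradius {d : ℕ} (W : Set (EuclideanSpace ℝ (Fin d))) : ℝ :=
  sSup {r : ℝ | 0 < r ∧ ∃ x ∈ W, closedBall x r ⊆ W}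

/-! If the ball `closedBall z ρ` lies in the convex body `W` and `‖x‖ ≤ tρ`, then the homothetic
copy of `W` with centre `z` and ratio `1 - t` lies in both `W` and `W - x`, since
`(1 - t) w + t z + x` is a convex combination of `w ∈ W` and a point of the ball. Hence the overlap
has volume at least `(1 - t)^d |W| ≥ (1 - d t) |W|` by Bernoulli's inequality; with `t = ‖x‖/ρ`
this gives `(1 - |W ∩ (W - x)|/|W|) ρ ≤ d‖x‖`, and taking the supremum over `ρ` gives the claim. -/

open scoped Pointwise

section Homothety

variable {E : Type*} [NormedAddCommGroup E] [NormedSpace ℝ E] {W : Set E} {z : E} {ρ t : ℝ}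

theorem Convex.homothety_add_mem (hW : Convex ℝ W) (hρ : 0 ≤ ρ) (hball : closedBall z ρ ⊆ W)
    (ht₀ : 0 ≤ t) (ht₁ : t ≤ 1) {w v : E} (hw : w ∈ W) (hv : ‖v‖ ≤ t * ρ) :
    AffineMap.homothety z (1 - t) w + v ∈ W := by
  have hmem : t • z + v ∈ t • closedBall z ρ := by
    rw [smul_closedBall t z hρ, Real.norm_of_nonneg ht₀]
    simpa [dist_eq_norm] using hv
  obtain ⟨u, hu, hu_eq : t • u = t • z + v⟩ := hmem
  have hcombo : AffineMap.homothety z (1 - t) w + v = (1 - t) • w + t • u := by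
    rw [hu_eq, AffineMap.homothety_apply]
    simp only [vsub_eq_sub, vadd_eq_add, smul_sub, sub_smul, one_smul]
    abel
  rw [hcombo]
  exact hW hw (hball hu) (by linarith) ht₀ (by ring)

theorem Convex.homothety_image_subset_inter_translate (hW : Convex ℝ W) (hρ : 0 ≤ ρ)
    (hball : closedBall z ρ ⊆ W) (ht₀ : 0 ≤ t) (ht₁ : t ≤ 1) {x : E} (hx : ‖x‖ ≤ t * ρ) :
    AffineMap.homothety z (1 - t) '' W ⊆ W ∩ (fun w => w - x) '' W := by
  rintro _ ⟨w, hw, rfl⟩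
  refine ⟨?_, _, hW.homothety_add_mem hρ hball ht₀ ht₁ hw hx, add_sub_cancel_right _ _⟩
  simpa using hW.homothety_add_mem hρ hball ht₀ ht₁ hw (v := 0) (by simpa using mul_nonneg ht₀ hρ)

end Homothety

section Measure

open Module

variable {E : Type*} [NormedAddCommGroup E] [NormedSpace ℝ E] [FiniteDimensional ℝ E]
  [MeasurableSpace E] [BorelSpace E] (μ : Measure E) [μ.IsAddHaarMeasure] {W : Set E}

theorem Convex.one_sub_pow_mul_measureReal_le_inter_translate (hW : Convex ℝ W)
    (hW_fin : μ W ≠ ⊤) {z : E} {ρ t : ℝ} (hρ : 0 ≤ ρ) (hball : closedBall z ρ ⊆ W)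
    (ht₀ : 0 ≤ t) (ht₁ : t ≤ 1) {x : E} (hx : ‖x‖ ≤ t * ρ) :
    (1 - t) ^ finrank ℝ E * μ.real W ≤ μ.real (W ∩ (fun w => w - x) '' W) := by
  have hpow : 0 ≤ (1 - t) ^ finrank ℝ E := pow_nonneg (by linarith) _
  calc (1 - t) ^ finrank ℝ E * μ.real W = μ.real (AffineMap.homothety z (1 - t) '' W) := by
        rw [measureReal_def, measureReal_def, Measure.addHaar_image_homothety, ENNReal.toReal_mul,
          abs_of_nonneg hpow, ENNReal.toReal_ofReal hpow]
    _ ≤ μ.real (W ∩ (fun w => w - x) '' W) :=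
        measureReal_mono (hW.homothety_image_subset_inter_translate hρ hball ht₀ ht₁ hx)
          (measure_ne_top_of_subset Set.inter_subset_left hW_fin)

theorem Convex.one_sub_measureReal_inter_translate_div_mul_le (hW : Convex ℝ W)
    (hW_fin : μ W ≠ ⊤) {z : E} {ρ : ℝ} (hρ : 0 < ρ) (hball : closedBall z ρ ⊆ W) (x : E) :
    (1 - μ.real (W ∩ (fun w => w - x) '' W) / μ.real W) * ρ ≤ finrank ℝ E * ‖x‖ := by
  have hW_pos : 0 < μ.real W := ENNReal.toReal_pos
    (measure_pos_of_superset hball (measure_closedBall_pos μ z hρ).ne').ne' hW_fin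
  rcases le_or_gt ‖x‖ ρ with hxρ | hρx
  · set t := ‖x‖ / ρ
    have hx_eq : ‖x‖ = t * ρ := (div_mul_cancel₀ _ hρ.ne').symm
    have ht₀ : 0 ≤ t := by positivity
    have ht₁ : t ≤ 1 := div_le_one_of_le₀ hxρ hρ.le
    have hratio : (1 - t) ^ finrank ℝ E ≤ μ.real (W ∩ (fun w => w - x) '' W) / μ.real W :=
      (le_div_iff₀ hW_pos).2 <|
        hW.one_sub_pow_mul_measureReal_le_inter_translate μ hW_fin hρ.le hball ht₀ ht₁ hx_eq.le
    have hbernoulli : 1 - finrank ℝ E * t ≤ (1 - t) ^ finrank ℝ E := by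
      simpa [sub_eq_add_neg] using one_add_mul_le_pow (a := -t) (by linarith) (finrank ℝ E)
    calc (1 - μ.real (W ∩ (fun w => w - x) '' W) / μ.real W) * ρ ≤ (finrank ℝ E * t) * ρ := by
          gcongr; linarith
      _ = finrank ℝ E * ‖x‖ := by rw [hx_eq]; ring
  · have : Nontrivial E := nontrivial_of_ne x 0 (norm_pos_iff.1 (hρ.trans hρx))
    have hdim : (1 : ℝ) ≤ finrank ℝ E := by exact_mod_cast finrank_pos
    have hratio : 0 ≤ μ.real (W ∩ (fun w => w - x) '' W) / μ.real W := by positivity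
    nlinarith

end Measure

theorem mul_inradius_le {d : ℕ} {W : Set (EuclideanSpace ℝ (Fin d))} {c a : ℝ} (ha : 0 ≤ a)
    (h : ∀ r > 0, ∀ z, closedBall z r ⊆ W → c * r ≤ a) : c * inradius W ≤ a := by
  rcases lt_or_ge c 0 with hc | hc
  · exact (mul_nonpos_of_nonpos_of_nonneg hc.le (Real.sSup_nonneg fun r hr => hr.1.le)).trans ha
  · rw [inradius, ← smul_eq_mul, ← Real.sSup_smul_of_nonneg hc]
    refine Real.sSup_le ?_ ha
    rintro _ ⟨r, ⟨hr, z, -, hball⟩, rfl⟩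
    exact h r hr z hball

theorem translate_overlap_inequality_general {d : ℕ}
    (W : Set (EuclideanSpace ℝ (Fin d)))
    (hconv : Convex ℝ W) (hcomp : IsCompact W) (hϱ : 0 < inradius W)
    (x : EuclideanSpace ℝ (Fin d)) :
    1 - (volume (W ∩ ((fun w => w - x) '' W))).toReal / (volume W).toReal ≤
      (d : ℝ) * ‖x‖ / inradius W := by
  rw [le_div_iff₀ hϱ]
  refine mul_inradius_le (by positivity) fun r hr z hball => ?_
  simpa [measureReal_def, finrank_euclideanSpace_fin] using
    hconv.one_sub_measureReal_inter_translate_div_mul_le volume hcomp.measure_lt_top.ne hr hball x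

/-- For a convex compact body `W` with positive inradius and `‖x‖ ≤ ϱ(W)`,
`1 − |W ∩ (W − x)|/|W| ≤ d‖x‖/ϱ(W)`. -/
theorem translate_overlap_inequality {d : ℕ} (hd : 1 ≤ d)
    (W : Set (EuclideanSpace ℝ (Fin d)))
    (hconv : Convex ℝ W) (hcomp : IsCompact W) (hϱ : 0 < inradius W)
    (x : EuclideanSpace ℝ (Fin d)) (hx : ‖x‖ ≤ inradius W) :
    1 - (volume (W ∩ ((fun w => w - x) '' W))).toReal / (volume W).toReal ≤
      (d : ℝ) * ‖x‖ / inradius W :=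
  translate_overlap_inequality_general W hconv hcomp hϱ x
end

section
/- Let W ⊂ ℝ^d be a compact convex set. Every half-open unit cube E_z = [−1/2,1/2)^d + z (z ∈ ℤ^d) that intersects both W and its complement (equivalently, satisfies 0 < |E_z ∩ W| and E_z ⊄ W, i.e. E_z meets the boundary ∂W) is contained in the Minkowski sum ∂W ⊕ B(0, √d). Consequently, the number of such cubes is at most |∂W ⊕ B(0,√d)| ≤ 2(|W ⊕ B(0,√d)| − |W|). -/
open MeasureTheory Metric
open scoped ENNReal Pointwise

/-- The half-open unit cube `E_z = [−1/2, 1/2)^d + z` at a lattice point `z ∈ ℤ^d`. -/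
def unitCube {d : ℕ} (z : Fin d → ℤ) : Set (EuclideanSpace ℝ (Fin d)) :=
  {y | ∀ i, (z i : ℝ) - 1 / 2 ≤ y i ∧ y i < (z i : ℝ) + 1 / 2}

/-!
A cube meeting both `W` and its complement is connected, so it meets `∂W`; its diameter is `√d`.
The cubes are disjoint of volume one, which gives the count. For the volume bound, split
`∂W ⊕ B` into the part outside `W`, contained in `(W ⊕ B) \ W`, the null set `∂W`, and the part
inside `int W`. A point `x` of the latter, at distance `t ≤ √d` from `Wᶜ` attained at `p`, is
the image of `2p - x ∈ (W ⊕ B) \ W` under the reflection `y ↦ 2π(y) - y` through the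
nearest-point projection `π` onto `W`. That reflection is `1`-Lipschitz, so it does not increase
Lebesgue measure.
-/

theorem IsPreconnected.inter_frontier_nonempty {X : Type*} [TopologicalSpace X] {s t : Set X}
    (hs : IsPreconnected s) (hst : (s ∩ t).Nonempty) (hst' : (s \ t).Nonempty) :
    (s ∩ frontier t).Nonempty := by
  by_contra! h
  have hinterior : ∀ x ∈ s, x ∈ closure t → x ∈ interior t := fun x hx hxc =>
    by_contra fun hxi => h.subset ⟨hx, hxc, hxi⟩
  obtain ⟨a, has, hat⟩ := hst
  obtain ⟨b, hbs, hbt⟩ := hst'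
  obtain ⟨x, -, hxi, hxc⟩ := hs (interior t) (closure t)ᶜ isOpen_interior
    isClosed_closure.isOpen_compl
    (fun x hx => (em (x ∈ closure t)).imp (hinterior x hx) id)
    ⟨a, has, hinterior a has (subset_closure hat)⟩
    ⟨b, hbs, fun hbc => hbt (interior_subset (hinterior b hbs hbc))⟩
  exact hxc (interior_subset_closure hxi)

section UnitCube

variable {d : ℕ}

theorem unitCube_eq_preimage_ofLp (z : Fin d → ℤ) :
    unitCube z = WithLp.ofLp ⁻¹'
      Set.univ.pi fun i => Set.Ico ((z i : ℝ) - 1 / 2) ((z i : ℝ) + 1 / 2) := by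
  ext y
  simp [unitCube]

theorem convex_unitCube (z : Fin d → ℤ) : Convex ℝ (unitCube z) := by
  rw [unitCube_eq_preimage_ofLp]
  exact (convex_pi fun i _ => convex_Ico _ _).linear_preimage
    (WithLp.linearEquiv 2 ℝ (Fin d → ℝ)).toLinearMap

theorem measurableSet_unitCube (z : Fin d → ℤ) : MeasurableSet (unitCube z) := by
  rw [unitCube_eq_preimage_ofLp]
  exact (PiLp.volume_preserving_ofLp _).measurable
    (MeasurableSet.univ_pi fun _ => measurableSet_Ico)

theorem volume_unitCube (z : Fin d → ℤ) : volume (unitCube z) = 1 := by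
  rw [unitCube_eq_preimage_ofLp, (PiLp.volume_preserving_ofLp _).measure_preimage
    (MeasurableSet.univ_pi fun _ => measurableSet_Ico).nullMeasurableSet, Real.volume_pi_Ico]
  norm_num

theorem disjoint_unitCube {z z' : Fin d → ℤ} (hne : z ≠ z') :
    Disjoint (unitCube z) (unitCube z') := by
  refine Set.disjoint_left.2 fun y hy hy' => hne (funext fun i => ?_)
  have h₁ : ((z i - z' i : ℤ) : ℝ) < 1 := by push_cast; linarith [(hy i).1, (hy' i).2]
  have h₂ : (-1 : ℝ) < ((z i - z' i : ℤ) : ℝ) := by push_cast; linarith [(hy i).2, (hy' i).1]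
  norm_cast at h₁ h₂
  omega

theorem dist_le_sqrt_of_mem_unitCube {z : Fin d → ℤ} {x y : EuclideanSpace ℝ (Fin d)}
    (hx : x ∈ unitCube z) (hy : y ∈ unitCube z) : dist x y ≤ Real.sqrt d := by
  rw [EuclideanSpace.dist_eq]
  refine Real.sqrt_le_sqrt ?_
  calc ∑ i, dist (x i) (y i) ^ 2 ≤ ∑ _i : Fin d, (1 : ℝ) := by
        gcongr with i
        rw [Real.dist_eq, sq_abs]
        nlinarith [hx i, hy i]
    _ = d := by simp

theorem unitCube_subset_frontier_add_closedBall {z : Fin d → ℤ}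
    {W : Set (EuclideanSpace ℝ (Fin d))} (hzW : (unitCube z ∩ W).Nonempty)
    (hzW' : ¬ unitCube z ⊆ W) :
    unitCube z ⊆ frontier W + closedBall 0 (Real.sqrt d) := by
  obtain ⟨f, hfz, hfW⟩ := (convex_unitCube z).isPreconnected.inter_frontier_nonempty hzW
    (Set.not_subset.1 hzW')
  intro x hx
  refine ⟨f, hfW, x - f, ?_, add_sub_cancel _ _⟩
  rw [mem_closedBall_zero_iff, ← dist_eq_norm]
  exact dist_le_sqrt_of_mem_unitCube hx hfz

theorem ncard_le_volume_of_unitCube_subset {S : Set (Fin d → ℤ)}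
    {A : Set (EuclideanSpace ℝ (Fin d))} (hS : ∀ z ∈ S, unitCube z ⊆ A) :
    (S.ncard : ℝ≥0∞) ≤ volume A := by
  rcases S.finite_or_infinite with hfin | hinf
  · calc (S.ncard : ℝ≥0∞) = ∑ z ∈ hfin.toFinset, volume (unitCube z) := by
          simp [volume_unitCube, Set.ncard_eq_toFinset_card _ hfin]
      _ = volume (⋃ z ∈ hfin.toFinset, unitCube z) :=
          (measure_biUnion_finset (fun z _ z' _ hne => disjoint_unitCube hne)
            fun z _ => measurableSet_unitCube z).symm
      _ ≤ volume A := measure_mono (Set.iUnion₂_subset fun z hz => hS z (by simpa using hz))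
  · simp [hinf.ncard]

end UnitCube

theorem LipschitzWith.addHaar_image_le {E : Type*} [NormedAddCommGroup E] [NormedSpace ℝ E]
    [FiniteDimensional ℝ E] [MeasurableSpace E] [BorelSpace E] (μ : Measure E)
    [μ.IsAddHaarMeasure] {f : E → E} (hf : LipschitzWith 1 f) (s : Set E) :
    μ (f '' s) ≤ μ s := by
  rw [μ.isAddLeftInvariant_eq_smul μH[Module.finrank ℝ E]]
  simp only [Measure.smul_apply, ENNReal.smul_def, smul_eq_mul]
  exact mul_le_mul_right (by simpa using hf.hausdorffMeasure_image_le (Nat.cast_nonneg _) s) _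

theorem Convex.le_dist_two_smul_sub_of_ball_subset {E : Type*} [NormedAddCommGroup E]
    [NormedSpace ℝ E] {W : Set E} (hW : Convex ℝ W) {x p w : E} {r : ℝ} (hball : ball x r ⊆ W)
    (hp : p ∉ interior W) (hw : w ∈ W) : r ≤ dist ((2 : ℝ) • p - x) w := by
  by_contra! hlt
  set m : E := (2⁻¹ : ℝ) • (w + x)
  -- `ball m (r / 2)` is the image of `ball x r` under the homothety of ratio `1/2` centred at `w`
  have hsub : ball m (r / 2) ⊆ W := by
    intro u hu
    have hv : (2 : ℝ) • u - w ∈ ball x r := by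
      rw [mem_ball, dist_eq_norm] at hu ⊢
      rw [show (2 : ℝ) • u - w - x = (2 : ℝ) • (u - m) by module, norm_smul]
      norm_num
      linarith
    convert hW hw (hball hv) (by norm_num : (0 : ℝ) ≤ 2⁻¹) (by norm_num : (0 : ℝ) ≤ 2⁻¹)
      (by norm_num) using 1
    module
  refine hp (interior_maximal hsub isOpen_ball ?_)
  rw [dist_eq_norm] at hlt
  rw [mem_ball, dist_eq_norm, show p - m = (2⁻¹ : ℝ) • ((2 : ℝ) • p - x - w) by module,
    norm_smul]
  norm_num
  linarith

section NearestPoint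

variable {F : Type*} [NormedAddCommGroup F] [InnerProductSpace ℝ F]

open scoped RealInnerProductSpace

theorem Convex.real_inner_sub_nonpos_of_forall_dist_le {K : Set F} (hK : Convex ℝ K) {y p : F}
    (hp : p ∈ K) (hmin : ∀ w ∈ K, dist y p ≤ dist y w) : ∀ w ∈ K, ⟪y - p, w - p⟫ ≤ 0 := by
  have : Nonempty K := ⟨⟨p, hp⟩⟩
  refine (norm_eq_iInf_iff_real_inner_le_zero hK hp).1 (le_antisymm ?_ ?_)
  · exact le_ciInf fun w => by simpa only [← dist_eq_norm] using hmin w w.2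
  · exact ciInf_le (f := fun w : K => ‖y - w‖) ⟨0, Set.forall_mem_range.2 fun _ => norm_nonneg _⟩ ⟨p, hp⟩

theorem eq_of_real_inner_sub_nonpos {y p q : F} (hp : ⟪y - p, q - p⟫ ≤ 0)
    (hq : ⟪y - q, p - q⟫ ≤ 0) : p = q := by
  have : ⟪q - p, q - p⟫ ≤ 0 := by
    have : ⟪y - p, q - p⟫ + ⟪y - q, p - q⟫ = ⟪q - p, q - p⟫ := by
      rw [← neg_sub q p, inner_neg_right, ← sub_eq_add_neg, ← inner_sub_left]
      congr 1
      abel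
    linarith
  exact (sub_eq_zero.1 (real_inner_self_nonpos.1 this)).symm

theorem lipschitzWith_one_two_smul_sub_of_real_inner_sub_nonpos {K : Set F} {P : F → F}
    (hPK : ∀ y, P y ∈ K) (hP : ∀ y, ∀ w ∈ K, ⟪y - P y, w - P y⟫ ≤ 0) :
    LipschitzWith 1 fun y => (2 : ℝ) • P y - y := by
  refine LipschitzWith.of_dist_le_mul fun y₁ y₂ => ?_
  rw [NNReal.coe_one, one_mul, dist_eq_norm, dist_eq_norm]
  set a := y₁ - y₂
  set b := P y₁ - P y₂
  have hab : ‖b‖ ^ 2 ≤ ⟪a, b⟫ := by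
    have h₁ := hP y₁ (P y₂) (hPK y₂)
    have h₂ := hP y₂ (P y₁) (hPK y₁)
    have : ⟪a, b⟫ - ‖b‖ ^ 2 = -⟪y₁ - P y₁, P y₂ - P y₁⟫ - ⟪y₂ - P y₂, P y₁ - P y₂⟫ := by
      rw [← real_inner_self_eq_norm_sq, ← inner_sub_left, ← neg_sub (P y₁) (P y₂),
        inner_neg_right, neg_neg, ← inner_sub_left]
      congr 1
      simp only [a, b]
      abel
    linarith
  have hsq : ‖(2 : ℝ) • b - a‖ ^ 2 ≤ ‖a‖ ^ 2 := by
    rw [norm_sub_sq_real, norm_smul, real_inner_smul_left, real_inner_comm]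
    norm_num
    nlinarith
  rw [show (2 : ℝ) • P y₁ - y₁ - ((2 : ℝ) • P y₂ - y₂) = (2 : ℝ) • b - a by module]
  exact pow_le_pow_iff_left₀ (norm_nonneg _) (norm_nonneg _) two_ne_zero |>.1 hsq

end NearestPoint

section DilatedFrontier

variable {F : Type*} [NormedAddCommGroup F] [InnerProductSpace ℝ F]

theorem Convex.frontier_add_closedBall_inter_interior_subset [ProperSpace F] {W : Set F}
    (hW : Convex ℝ W) (hWc : IsClosed W) {P : F → F}
    (hP : ∀ y, P y ∈ W ∧ ∀ w ∈ W, dist y (P y) ≤ dist y w) (r : ℝ) :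
    (frontier W + closedBall 0 r) ∩ interior W ⊆
      (fun y => (2 : ℝ) • P y - y) '' ((W + closedBall 0 r) \ W) := by
  rintro x ⟨⟨f, hf, b, hb, rfl⟩, hxW⟩
  have hfc : f ∈ closure Wᶜ := closure_compl (s := W) ▸ hf.2
  obtain ⟨p, hpc, hpd⟩ :=
    exists_mem_closure_infDist_eq_dist (closure_nonempty_iff.1 ⟨f, hfc⟩) (f + b)
  rw [closure_compl] at hpc
  set x := f + b
  have hball : ball x (dist x p) ⊆ W := hpd ▸ ball_infDist_compl_subset
  have ht : 0 < dist x p := dist_pos.2 fun h => hpc (h ▸ hxW)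
  have htr : dist x p ≤ r := by
    rw [← hpd, ← infDist_closure]
    calc infDist x (closure Wᶜ) ≤ dist x f := infDist_le_dist_of_mem hfc
      _ ≤ r := by simpa [x, dist_eq_norm] using hb
  have hpW : p ∈ W := hWc.closure_subset_iff.2 hball <| by
    rw [closure_ball x ht.ne']
    exact mem_closedBall.2 (dist_comm p x).le
  set y := (2 : ℝ) • p - x
  have hyp : dist y p = dist x p := by
    rw [dist_eq_norm, dist_eq_norm', show y - p = p - x by simp only [y]; module]
  have hmin : ∀ w ∈ W, dist y p ≤ dist y w := fun w hw =>
    hyp ▸ hW.le_dist_two_smul_sub_of_ball_subset hball hpc hw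
  have hPy : P y = p := eq_of_real_inner_sub_nonpos
    (hW.real_inner_sub_nonpos_of_forall_dist_le (hP y).1 (hP y).2 p hpW)
    (hW.real_inner_sub_nonpos_of_forall_dist_le hpW hmin _ (hP y).1)
  refine ⟨y, ⟨⟨p, hpW, p - x, ?_, by simp only [y]; module⟩, fun hy => ?_⟩, ?_⟩
  · rwa [mem_closedBall_zero_iff, ← dist_eq_norm, dist_comm]
  · linarith [hmin y hy, dist_self y]
  · simp only [hPy, y]
    module

theorem Convex.addHaar_frontier_add_closedBall_le [FiniteDimensional ℝ F] [MeasurableSpace F]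
    [BorelSpace F] (μ : Measure F) [μ.IsAddHaarMeasure] {W : Set F} (hW : Convex ℝ W)
    (hWc : IsCompact W) {r : ℝ} (hr : 0 ≤ r) :
    μ (frontier W + closedBall 0 r) ≤ 2 * (μ (W + closedBall 0 r) - μ W) := by
  rcases W.eq_empty_or_nonempty with rfl | hne
  · simp
  obtain ⟨P, hP⟩ : ∃ P : F → F, ∀ y, P y ∈ W ∧ ∀ w ∈ W, dist y (P y) ≤ dist y w := by
    choose P hPW hPd using hWc.exists_infDist_eq_dist hne
    exact ⟨P, fun y => ⟨hPW y, fun w hw => hPd y ▸ infDist_le_dist_of_mem hw⟩⟩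
  set A := frontier W + closedBall (0 : F) r
  set D := (W + closedBall (0 : F) r) \ W
  have hreflect : μ (A ∩ interior W) ≤ μ D :=
    (measure_mono (hW.frontier_add_closedBall_inter_interior_subset hWc.isClosed hP r)).trans
      ((lipschitzWith_one_two_smul_sub_of_real_inner_sub_nonpos (fun y => (hP y).1)
        fun y => hW.real_inner_sub_nonpos_of_forall_dist_le (hP y).1 (hP y).2).addHaar_image_le
        μ D)
  have hAW : A ∩ W ⊆ (A ∩ interior W) ∪ frontier W := fun x hx =>
    (em (x ∈ interior W)).imp (fun hxi => ⟨hx.1, hxi⟩) fun hxi => ⟨subset_closure hx.2, hxi⟩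
  have hAD : A \ W ⊆ D :=
    Set.sdiff_subset_sdiff_left (Set.add_subset_add_right hWc.isClosed.frontier_subset)
  have hWD : W ⊆ W + closedBall (0 : F) r := fun w hw =>
    ⟨w, hw, 0, mem_closedBall_self hr, add_zero w⟩
  calc μ A ≤ μ (A ∩ W) + μ (A \ W) := measure_le_inter_add_sdiff _ _ _
    _ ≤ μ (A ∩ interior W) + μ (frontier W) + μ D :=
        add_le_add ((measure_mono hAW).trans (measure_union_le _ _)) (measure_mono hAD)
    _ ≤ μ D + 0 + μ D := by
        gcongr
        exact (hW.addHaar_frontier μ).le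
    _ = 2 * (μ (W + closedBall 0 r) - μ W) := by
        rw [add_zero, ← two_mul, measure_sdiff hWD hWc.isClosed.measurableSet.nullMeasurableSet
          hWc.measure_lt_top.ne]

end DilatedFrontier

theorem boundary_cubes_subset_dilated_frontier_general {d : ℕ}
    (W : Set (EuclideanSpace ℝ (Fin d))) (hconv : Convex ℝ W) (hcomp : IsCompact W) :
    (∀ z : Fin d → ℤ, 0 < volume (unitCube z ∩ W) → ¬ unitCube z ⊆ W →
      unitCube z ⊆ frontier W + closedBall (0 : EuclideanSpace ℝ (Fin d)) (Real.sqrt d)) ∧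
    ({z : Fin d → ℤ | 0 < volume (unitCube z ∩ W) ∧ ¬ unitCube z ⊆ W}.ncard : ℝ≥0∞) ≤
      volume (frontier W + closedBall (0 : EuclideanSpace ℝ (Fin d)) (Real.sqrt d)) ∧
    volume (frontier W + closedBall (0 : EuclideanSpace ℝ (Fin d)) (Real.sqrt d)) ≤
      2 * (volume (W + closedBall (0 : EuclideanSpace ℝ (Fin d)) (Real.sqrt d)) - volume W) := by
  have hcubes : ∀ z : Fin d → ℤ, 0 < volume (unitCube z ∩ W) → ¬ unitCube z ⊆ W →
      unitCube z ⊆ frontier W + closedBall 0 (Real.sqrt d) := fun z hvol hsub =>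
    unitCube_subset_frontier_add_closedBall (nonempty_of_measure_ne_zero hvol.ne') hsub
  exact ⟨hcubes, ncard_le_volume_of_unitCube_subset fun z hz => hcubes z hz.1 hz.2,
    hconv.addHaar_frontier_add_closedBall_le volume hcomp (Real.sqrt_nonneg d)⟩

/-- Every half-open unit cube meeting the boundary of a compact convex set `W`
(i.e. with `0 < |E_z ∩ W|` and `E_z ⊄ W`) is contained in `∂W ⊕ B(0,√d)`, and the
number of such cubes is at most `|∂W ⊕ B(0,√d)| ≤ 2(|W ⊕ B(0,√d)| − |W|)`. -/
theorem boundary_cubes_subset_dilated_frontier {d : ℕ} (hd : 1 ≤ d)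
    (W : Set (EuclideanSpace ℝ (Fin d))) (hconv : Convex ℝ W) (hcomp : IsCompact W) :
    (∀ z : Fin d → ℤ, 0 < volume (unitCube z ∩ W) → ¬ unitCube z ⊆ W →
      unitCube z ⊆ frontier W + closedBall (0 : EuclideanSpace ℝ (Fin d)) (Real.sqrt d)) ∧
    ({z : Fin d → ℤ | 0 < volume (unitCube z ∩ W) ∧ ¬ unitCube z ⊆ W}.ncard : ℝ≥0∞) ≤
      volume (frontier W + closedBall (0 : EuclideanSpace ℝ (Fin d)) (Real.sqrt d)) ∧
    volume (frontier W + closedBall (0 : EuclideanSpace ℝ (Fin d)) (Real.sqrt d)) ≤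
      2 * (volume (W + closedBall (0 : EuclideanSpace ℝ (Fin d)) (Real.sqrt d)) - volume W) :=
  boundary_cubes_subset_dilated_frontier_general W hconv hcomp
end
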